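/- Suppose two jump points s₁ < s₂ are added into one open interval I_{α₀} = (t_{α₀}, t_{α₀+1}) of the original partition, producing subintervals I¹ = (t_{α₀},s₁), I² = (s₁,s₂), I³ = (s₂,t_{α₀+1}), I⁴ = {s₁}, I⁵ = {s₂}. Let σ be a bijection of ℝ with both 𝒜 and 𝒜_S invariant under σ and σ⁻¹, and assume σ(I¹) = I², σ(I²) = I³, σ(I³) = I¹, σ(I⁴) = I⁴, σ(I⁵) = I⁵. Then for every n ∈ ℤ: Sepⁿ_{𝒜_S}(ℝ) = Sepⁿ_𝒜(ℝ) if 3 ∣ n, and Sepⁿ_{𝒜_S}(ℝ) = Sepⁿ_𝒜(ℝ) ∪ (I¹ ∪ I² ∪ I³) if 3 ∤ n. Consequently 𝒜_S′ = 𝒜′ \ {Σₙ fₙδⁿ ∈ 𝒜′ : fₙ does not vanish identically on I¹ ∪ I² ∪ I³ for some n with 3 ∤ n}. -/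

import Mathlib

open scoped Classical

noncomputable section

namespace PaperTRS

/-- The algebra of complex valued functions constant on each set of the family `P`. -/
def partAlg {X J : Type*} (P : J → Set X) : Subalgebra ℂ (X → ℂ) where
  carrier := {h | ∀ i, ∀ x ∈ P i, ∀ y ∈ P i, h x = h y}
  mul_mem' := by
    intro a b ha hb i x hx y hy
    simp only [Pi.mul_apply, ha i x hx y hy, hb i x hx y hy]
  add_mem' := by
    intro a b ha hb i x hx y hy
    simp only [Pi.add_apply, ha i x hx y hy, hb i x hx y hy]
  algebraMap_mem' := by intro r i x hx y hy; rfl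

/-- Piecewise constant functions on `ℝ` whose jumps all lie in the set `T`. -/
def pcAlgOn (T : Set ℝ) : Subalgebra ℂ (ℝ → ℂ) where
  carrier := {h | ∀ x y : ℝ, x ∉ T → y ∉ T →
    (∀ u ∈ T, u ∉ Set.Icc (min x y) (max x y)) → h x = h y}
  mul_mem' := by
    intro a b ha hb x y hx hy hxy
    simp only [Pi.mul_apply, ha x y hx hy hxy, hb x y hx hy hxy]
  add_mem' := by
    intro a b ha hb x y hx hy hxy
    simp only [Pi.add_apply, ha x y hx hy hxy, hb x y hx hy hxy]
  algebraMap_mem' := by intro r x y _ _ _; rfl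

/-- Invariance of an algebra of functions under a self-map of `X`. -/
def AlgInvariant {X : Type*} (A : Subalgebra ℂ (X → ℂ)) (σ : X → X) : Prop :=
  ∀ h ∈ A, (h ∘ σ) ∈ A

/-- `Sep A σ n = {x | ∃ h ∈ A, h x ≠ σ̃ⁿ(h) x}`, where `σ̃ⁿ(h) = h ∘ σ⁻ⁿ`. -/
def Sep {X : Type*} (A : Subalgebra ℂ (X → ℂ)) (σ : Equiv.Perm X) (n : ℤ) : Set X :=
  {x | ∃ h ∈ A, h x ≠ h ((σ ^ n)⁻¹ x)}

/-- Twisted convolution product on the crossed product `⋊ ℤ`: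
`(fₙ δⁿ) * (gₘ δᵐ) = fₙ · σ̃ⁿ(gₘ) · δ^{n+m}` extended bilinearly. -/
def cmul {X : Type*} (σ : Equiv.Perm X) (f g : ℤ →₀ (X → ℂ)) : ℤ →₀ (X → ℂ) :=
  f.sum fun n a => g.sum fun m b =>
    Finsupp.single (n + m) (fun x => a x * b ((σ ^ n)⁻¹ x))

/-- Membership of an element `Σ fₙ δⁿ` in the crossed product of the algebra `B` with `ℤ`. -/
def InCrossed {X : Type*} (B : Subalgebra ℂ (X → ℂ)) (f : ℤ →₀ (X → ℂ)) : Prop :=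
  ∀ n, f n ∈ B

/-- The commutant of `A` inside the crossed product `B ⋊ ℤ` (where `A ⊆ B`). -/
def commutant {X : Type*} (A B : Subalgebra ℂ (X → ℂ)) (σ : Equiv.Perm X) :
    Set (ℤ →₀ (X → ℂ)) :=
  {f | InCrossed B f ∧
    ∀ a ∈ A, cmul σ f (Finsupp.single 0 a) = cmul σ (Finsupp.single 0 a) f}

/-- The jump points `t₁ < ⋯ < t_N` extended by `t₀ = -∞` and `t_{N+1} = +∞`. -/
def tE (N : ℕ) (t : Fin N → ℝ) (i : ℕ) : EReal :=
  if h : 1 ≤ i ∧ i ≤ N then ((t ⟨i - 1, by omega⟩ : ℝ) : EReal)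
  else if i = 0 then ⊥ else ⊤

/-- The open interval `I_i = (t_i, t_{i+1})` for `0 ≤ i ≤ N`. -/
def openPiece (N : ℕ) (t : Fin N → ℝ) (i : ℕ) : Set ℝ :=
  {x : ℝ | tE N t i < (x : EReal) ∧ (x : EReal) < tE N t (i + 1)}

/-- The sets of the partition of `ℝ` determined by the jump points: the open
intervals `I_0, …, I_N` together with the singletons `{t_i}`. -/
def pieces (N : ℕ) (t : Fin N → ℝ) : Set (Set ℝ) :=
  {P | (∃ i : ℕ, i ≤ N ∧ P = openPiece N t i) ∨ (∃ i : Fin N, P = {t i})}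

/-- `C_k`: points `x` such that `k` is the smallest positive integer with `x` and
`σᵏ(x)` in one common set of the partition. -/
def Ck (N : ℕ) (t : Fin N → ℝ) (σ : Equiv.Perm ℝ) (k : ℕ) : Set ℝ :=
  {x | IsLeast {j : ℕ | 0 < j ∧ ∃ P ∈ pieces N t, x ∈ P ∧ (σ ^ j) x ∈ P} k}

end PaperTRS
namespace PaperTRS

/-- With `p` points `s i 0 < ⋯ < s i (p-1)` added in the interval `I_{α i}`, the `j`-th
open subinterval of the refined partition of `I_{α i}`, for `j = 0, …, p`. -/
def subPiece (N : ℕ) (t : Fin N → ℝ) {k p : ℕ} (α : Fin k → ℕ)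
    (s : Fin k → Fin p → ℝ) (i : Fin k) (j : Fin (p + 1)) : Set ℝ :=
  {x : ℝ |
    (if hj : (j : ℕ) = 0 then tE N t (α i)
      else ((s i ⟨(j : ℕ) - 1, by have := j.isLt; omega⟩ : ℝ) : EReal)) < (x : EReal) ∧
    (x : EReal) <
      (if hj : (j : ℕ) = p then tE N t (α i + 1)
        else ((s i ⟨(j : ℕ), by have := j.isLt; omega⟩ : ℝ) : EReal))}

/-- The sets of the refined partition of the union of the intervals `I_{α i}`: the open
subintervals determined by the added jump points together with the singleton jump points. -/
def cyclePieces (N : ℕ) (t : Fin N → ℝ) {k p : ℕ} (α : Fin k → ℕ)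
    (s : Fin k → Fin p → ℝ) : Set (Set ℝ) :=
  {P | (∃ i j, P = subPiece N t α s i j) ∨ (∃ i j, P = ({s i j} : Set ℝ))}

/-- `C̃_r`: points `x` of `⋃ᵢ I_{α i}` such that `r` is the smallest positive integer with
`x` and `σʳ(x)` in one common set of the refined partition. -/
def Ctil (N : ℕ) (t : Fin N → ℝ) (σ : Equiv.Perm ℝ) {k p : ℕ} (α : Fin k → ℕ)
    (s : Fin k → Fin p → ℝ) (r : ℕ) : Set ℝ :=
  {x | x ∈ ⋃ i, openPiece N t (α i) ∧
    IsLeast {j : ℕ | 0 < j ∧ ∃ P ∈ cyclePieces N t α s, x ∈ P ∧ (σ ^ j) x ∈ P} r}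

/-- The cyclic setup: `k` pairwise distinct open intervals `I_{α 0}, …, I_{α (k-1)}` of the
original partition, contained in `C_k` and permuted cyclically by `σ`, with `p` jump points
`s i 0 < ⋯ < s i (p-1)` added into each of them, and both the original algebra `𝒜` and the
refined algebra `𝒜_S` invariant under `σ` and `σ⁻¹`. -/
def CyclicSetup (N : ℕ) (t : Fin N → ℝ) (σ : Equiv.Perm ℝ) {k p : ℕ} (α : Fin k → ℕ)
    (s : Fin k → Fin p → ℝ) : Prop :=
  0 < k ∧ (∀ i, α i ≤ N) ∧ Function.Injective α ∧
  (∀ i j, s i j ∈ openPiece N t (α i)) ∧ (∀ i, StrictMono (s i)) ∧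
  (∀ i : Fin k, ∃ i' : Fin k, ((i' : ℕ) = ((i : ℕ) + 1) % k) ∧
    σ '' openPiece N t (α i) = openPiece N t (α i')) ∧
  (∀ i, openPiece N t (α i) ⊆ Ck N t σ k) ∧
  AlgInvariant (pcAlgOn (Set.range t)) σ ∧
  AlgInvariant (pcAlgOn (Set.range t)) σ.symm ∧
  AlgInvariant (pcAlgOn (Set.range t ∪ ⋃ i, Set.range (s i))) σ ∧
  AlgInvariant (pcAlgOn (Set.range t ∪ ⋃ i, Set.range (s i))) σ.symm

/-- `C_k` for the partition `P` of a general set `X`. -/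
def CkGen {X ι : Type*} (P : ι → Set X) (σ : Equiv.Perm X) (k : ℕ) : Set X :=
  {x | IsLeast {j : ℕ | 0 < j ∧ ∃ i, x ∈ P i ∧ (σ ^ j) x ∈ P i} k}

/-- `C̃_r` relative to a family `Q` of refined pieces inside the subset `base` of `X`. -/
def CtilGen {X ι : Type*} (σ : Equiv.Perm X) (Q : ι → Set X) (base : Set X) (r : ℕ) :
    Set X :=
  {x | x ∈ base ∧ IsLeast {j : ℕ | 0 < j ∧ ∃ i, x ∈ Q i ∧ (σ ^ j) x ∈ Q i} r}

/-- `C_∞`: points that never return to the partition set they lie in. -/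
def Cinf {X ι : Type*} (P : ι → Set X) (σ : Equiv.Perm X) : Set X :=
  {x | ∀ k : ℕ, 0 < k → ¬∃ i, x ∈ P i ∧ (σ ^ k) x ∈ P i}

end PaperTRS
namespace PaperTRS

/-!
A function in `pcAlgOn T` takes the same value at `x` and `y` exactly when no point of `T` lies
in `[x, y]` (otherwise the sign of `z - u` at such a point `u` separates them), so `Sepⁿ`
consists of the points `x` that do not share a gap with `σ⁻ⁿ x`. For `x ∉ I_{α₀}` adding
`s₁, s₂` changes nothing: a new point in `[x, σ⁻ⁿ x]` not separated from `x` by `T` would put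
`x` into the gap `I_{α₀}` of `T`. The fixed points `s₁, s₂` lie in no `Sepⁿ`. A point of `Iʲ`
is sent by `σ⁻ⁿ` into `I^{j-n mod 3}`, which lies in the same gap `I_{α₀}` of `T`, and in the
same gap of the refined jump set iff `3 ∣ n`. The commutant statement follows since `Σ fₙ δⁿ`
commutes with `B` iff each `fₙ` vanishes on `Sepⁿ_B`.
-/

open Set Function

def SameGap (T : Set ℝ) (x y : ℝ) : Prop :=
  x = y ∨ Disjoint (uIcc x y) T

/-- For example, an open interval between consecutive points of `T`. -/
def IsGap (T O : Set ℝ) : Prop :=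
  ∀ x ∈ O, ∀ y, SameGap T x y ↔ y ∈ O

section SameGap

variable {S T : Set ℝ} {x y u : ℝ}

theorem SameGap.refl (T : Set ℝ) (x : ℝ) : SameGap T x x := Or.inl rfl

theorem SameGap.mono (hST : S ⊆ T) (h : SameGap T x y) : SameGap S x y :=
  h.imp_right fun hd => hd.mono_right hST

theorem sameGap_union_iff : SameGap (T ∪ S) x y ↔ SameGap T x y ∧ SameGap S x y := by
  refine ⟨fun h => ⟨h.mono subset_union_left, h.mono subset_union_right⟩, ?_⟩
  rintro ⟨hT | hT, hS | hS⟩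
  exacts [Or.inl hT, Or.inl hT, Or.inl hS, Or.inr (disjoint_union_right.2 ⟨hT, hS⟩)]

theorem SameGap.eq_of_mem (h : SameGap T x y) (hu : u ∈ T) (huxy : u ∈ uIcc x y) : x = y :=
  h.resolve_right fun hd => disjoint_left.1 hd huxy hu

theorem SameGap.lt_iff_lt (h : SameGap T x y) (hu : u ∈ T) : x < u ↔ y < u := by
  rcases eq_or_ne x y with rfl | hxy
  · rfl
  have hnot := mt (h.eq_of_mem hu) hxy
  rw [mem_uIcc] at hnot
  grind

theorem SameGap.lt_iff_lt' (h : SameGap T x y) (hu : u ∈ T) : u < x ↔ u < y := by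
  rcases eq_or_ne x y with rfl | hxy
  · rfl
  have hnot := mt (h.eq_of_mem hu) hxy
  rw [mem_uIcc] at hnot
  grind

theorem sameGap_of_ordConnected {C : Set ℝ} (hC : C.OrdConnected) (hCT : Disjoint C T)
    (hx : x ∈ C) (hy : y ∈ C) : SameGap T x y :=
  Or.inr (hCT.mono_left (hC.uIcc_subset hx hy))

theorem sameGap_iff_forall_mem_pcAlgOn : SameGap T x y ↔ ∀ h ∈ pcAlgOn T, h x = h y := by
  refine ⟨?_, fun h => ?_⟩
  · rintro (rfl | hd) h hh
    · rfl
    exact hh x y (disjoint_left.1 hd left_mem_uIcc) (disjoint_left.1 hd right_mem_uIcc)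
      fun u hu hu' => disjoint_left.1 hd hu' hu
  by_contra hxy
  obtain ⟨hne, u, huxy, hu⟩ : x ≠ y ∧ ∃ u ∈ uIcc x y, u ∈ T := by
    simpa [SameGap, not_disjoint_iff] using hxy
  -- the sign of `z - u` is constant on each gap of `T` but differs at `x` and `y`
  have hsign : (fun z => (Real.sign (z - u) : ℂ)) ∈ pcAlgOn T := by
    intro a b _ _ hab
    have hu' := hab u hu
    rw [← uIcc, mem_uIcc] at hu'
    rcases (by grind : (a < u ∧ b < u) ∨ (u < a ∧ u < b)) with ⟨ha, hb⟩ | ⟨ha, hb⟩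
    · simp [Real.sign_of_neg, sub_neg.2 ha, sub_neg.2 hb]
    · simp [Real.sign_of_pos, sub_pos.2 ha, sub_pos.2 hb]
  have hxy := Complex.ofReal_inj.1 (h (fun z => (Real.sign (z - u) : ℂ)) hsign)
  rw [mem_uIcc] at huxy
  rcases lt_trichotomy x u with hx | hx | hx <;> rcases lt_trichotomy y u with hy | hy | hy
  all_goals first
    | grind
    | norm_num [Real.sign_of_neg, Real.sign_of_pos, sub_neg.2, sub_pos.2, hx, hy] at hxy

theorem mem_sep_pcAlgOn_iff (σ : Equiv.Perm ℝ) (n : ℤ) :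
    x ∈ Sep (pcAlgOn T) σ n ↔ ¬ SameGap T x ((σ ^ n)⁻¹ x) := by
  simp [Sep, sameGap_iff_forall_mem_pcAlgOn]

end SameGap

section IsGap

variable {S T O D : Set ℝ}

theorem IsGap.inter (hO : IsGap T O) (hD : IsGap S D) : IsGap (T ∪ S) (O ∩ D) := by
  intro x hx y
  rw [sameGap_union_iff, hO x hx.1, hD x hx.2, mem_inter_iff]

theorem IsGap.ordConnected (hO : IsGap T O) : O.OrdConnected := by
  refine ⟨fun x hx y hy z hz => ?_⟩
  rcases (hO x hx y).2 hy with rfl | hd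
  · rw [Icc_self, mem_singleton_iff] at hz
    rwa [hz]
  · exact (hO x hx z).1
      (Or.inr (hd.mono_left (uIcc_subset_uIcc left_mem_uIcc (Icc_subset_uIcc hz))))

theorem isGap_of_ordConnected (hD : D.OrdConnected) (hDS : Disjoint D S)
    (h : ∀ x ∈ D, ∀ y, SameGap S x y → y ∈ D) : IsGap S D :=
  fun x hx y => ⟨h x hx y, sameGap_of_ordConnected hD hDS hx⟩

theorem isGap_Iio {s : ℝ} (hs : s ∈ S) (hS : ∀ s' ∈ S, s ≤ s') : IsGap S (Iio s) :=
  isGap_of_ordConnected ordConnected_Iio (disjoint_right.2 fun s' hs' => not_lt.2 (hS s' hs'))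
    fun _ hx _ h => (h.lt_iff_lt hs).1 hx

theorem isGap_Ioi {s : ℝ} (hs : s ∈ S) (hS : ∀ s' ∈ S, s' ≤ s) : IsGap S (Ioi s) :=
  isGap_of_ordConnected ordConnected_Ioi (disjoint_right.2 fun s' hs' => not_lt.2 (hS s' hs'))
    fun _ hx _ h => (h.lt_iff_lt' hs).1 hx

theorem isGap_Ioo {a b : ℝ} (ha : a ∈ S) (hb : b ∈ S) (hS : Disjoint (Ioo a b) S) :
    IsGap S (Ioo a b) :=
  isGap_of_ordConnected ordConnected_Ioo hS
    fun _ hx _ h => ⟨(h.lt_iff_lt' ha).1 hx.1, (h.lt_iff_lt hb).1 hx.2⟩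

theorem IsGap.sameGap_of_notMem (hO : IsGap T O) (hSO : S ⊆ O) {x y : ℝ} (hx : x ∉ O)
    (h : SameGap T x y) : SameGap S x y := by
  refine h.imp_right fun hd => disjoint_right.2 fun s hs hsxy => hx ?_
  -- a point of `S` between `x` and `y` would lie in the same gap `O` of `T` as `x`
  exact (hO s (hSO hs) x).1
    (Or.inr (hd.mono_left (uIcc_subset_uIcc hsxy left_mem_uIcc)))

end IsGap

section Commutant

variable {X : Type*} (σ : Equiv.Perm X)

theorem sum_single_apply_of_map_zero (f : ℤ →₀ (X → ℂ)) {g : ℤ → (X → ℂ) → (X → ℂ)}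
    (hg : ∀ n, g n 0 = 0) (m : ℤ) :
    (f.sum fun n a => Finsupp.single n (g n a)) m = g m (f m) := by
  classical
  simp only [Finsupp.sum_apply, Finsupp.single_apply, Finsupp.sum_ite_eq', Finsupp.mem_support_iff]
  split_ifs with h
  · rfl
  · rw [not_not.1 h, hg]

theorem cmul_single_zero_right_apply (f : ℤ →₀ (X → ℂ)) (a : X → ℂ) (m : ℤ) :
    cmul σ f (Finsupp.single 0 a) m = fun x => f m x * a ((σ ^ m)⁻¹ x) := by
  have hinner : ∀ (n : ℤ) (b : X → ℂ), ((Finsupp.single 0 a).sum fun k c =>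
      Finsupp.single (n + k) fun x => b x * c ((σ ^ n)⁻¹ x)) =
        Finsupp.single n fun x => b x * a ((σ ^ n)⁻¹ x) := fun n b => by
    rw [Finsupp.sum_single_index] <;> simp [Pi.zero_def]
  simp only [cmul, hinner]
  exact sum_single_apply_of_map_zero f (fun n => by ext; simp) m

theorem cmul_single_zero_left_apply (f : ℤ →₀ (X → ℂ)) (a : X → ℂ) (m : ℤ) :
    cmul σ (Finsupp.single 0 a) f m = fun x => a x * f m x := by
  rw [cmul, Finsupp.sum_single_index]
  · simp only [zero_add, zpow_zero, inv_one, Equiv.Perm.coe_one, id_eq]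
    exact sum_single_apply_of_map_zero f (fun n => by ext; simp) m
  · simp only [Pi.zero_apply, zero_mul]
    simp [← Pi.zero_def]

theorem commutant_eq (A B : Subalgebra ℂ (X → ℂ)) :
    commutant A B σ = {f | InCrossed B f ∧ ∀ n, ∀ x ∈ Sep A σ n, f n x = 0} := by
  ext f
  refine and_congr_right fun _ => ⟨fun hc n x ⟨h, hA, hne⟩ => ?_, fun hv a ha => ?_⟩
  · have e := congr_fun (congr_arg (· n) (hc h hA)) x
    simp only [cmul_single_zero_right_apply, cmul_single_zero_left_apply] at e
    have : f n x * (h ((σ ^ n)⁻¹ x) - h x) = 0 := by rw [mul_sub, e]; ring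
    exact (mul_eq_zero.1 this).resolve_right (sub_ne_zero.2 hne.symm)
  · ext m x
    rw [cmul_single_zero_right_apply, cmul_single_zero_left_apply]
    by_cases hx : x ∈ Sep A σ m
    · simp [hv m x hx]
    · change f m x * a ((σ ^ m)⁻¹ x) = a x * f m x
      rw [show a ((σ ^ m)⁻¹ x) = a x from not_not.1 fun hne => hx ⟨a, ha, Ne.symm hne⟩, mul_comm]

theorem commutant_eq_diff_of_mem_sep_iff {A A' B : Subalgebra ℂ (X → ℂ)} {U : Set X}
    {p : ℤ → Prop} (h : ∀ n x, x ∈ Sep A' σ n ↔ x ∈ Sep A σ n ∨ (x ∈ U ∧ p n)) :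
    commutant A' B σ =
      commutant A B σ \ {f | ∃ n, p n ∧ ¬ ∀ x ∈ U, f n x = 0} := by
  ext f
  simp only [commutant_eq, h, mem_sdiff, mem_ofPred_eq, or_imp, and_imp, forall_and, not_exists,
    not_and, not_not, and_assoc]
  exact and_congr_right fun _ => and_congr_right fun _ => forall_congr' fun _ =>
    ⟨fun h hn x hx => h x hx hn, fun h x hx hn => h hn x hx⟩

end Commutant

theorem image_zpow_eq_of_image_eq {X : Type*} {k : ℕ} {J : ZMod k → Set X}
    {σ : Equiv.Perm X} (h : ∀ i, σ '' J i = J (i + 1)) (n : ℤ) (i : ZMod k) :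
    ⇑(σ ^ n) '' J i = J (i + n) := by
  induction n using Int.induction_on generalizing i with
  | zero => simp
  | succ n ih =>
    rw [zpow_add_one, Equiv.Perm.coe_mul, image_comp, h, ih]
    push_cast
    ring_nf
  | pred n ih =>
    have hinv : ⇑σ⁻¹ '' J i = J (i - 1) := by
      rw [← sub_add_cancel i 1, ← h, Equiv.Perm.inv_def, Equiv.symm_image_image,
        add_sub_cancel_right]
    rw [zpow_sub_one, Equiv.Perm.coe_mul, image_comp, hinv, ih]
    push_cast
    ring_nf

structure CyclicRefinement (T S : Set ℝ) (σ : Equiv.Perm ℝ) {k : ℕ} (J : ZMod k → Set ℝ) :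
    Prop where
  isGap_iUnion_union : IsGap T ((⋃ i, J i) ∪ S)
  isGap_piece : ∀ i, IsGap (T ∪ S) (J i)
  pairwise_disjoint : Pairwise (Disjoint on J)
  disjoint_iUnion : Disjoint (⋃ i, J i) S
  image_piece : ∀ i, σ '' J i = J (i + 1)
  fixed : ∀ s ∈ S, σ s = s

theorem CyclicRefinement.mem_sep_union_iff {T S : Set ℝ} {σ : Equiv.Perm ℝ} {k : ℕ}
    {J : ZMod k → Set ℝ} (hC : CyclicRefinement T S σ J) (n : ℤ) (x : ℝ) :
    x ∈ Sep (pcAlgOn (T ∪ S)) σ n ↔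
      x ∈ Sep (pcAlgOn T) σ n ∨ (x ∈ ⋃ i, J i ∧ ¬ (k : ℤ) ∣ n) := by
  rw [mem_sep_pcAlgOn_iff, mem_sep_pcAlgOn_iff, ← zpow_neg]
  set y := (σ ^ (-n)) x
  by_cases hxO : x ∈ (⋃ i, J i) ∪ S
  · rcases hxO with hxJ | hxS
    · obtain ⟨i, hi⟩ := mem_iUnion.1 hxJ
      have hyi : y ∈ J (i - n) := by
        rw [sub_eq_add_neg, ← Int.cast_neg, ← image_zpow_eq_of_image_eq hC.image_piece]
        exact mem_image_of_mem _ hi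
      have hyJ : y ∈ J i ↔ (n : ZMod k) = 0 := by
        refine ⟨fun hy => ?_, fun hn => by rwa [hn, sub_zero] at hyi⟩
        exact sub_eq_self.1 (hC.pairwise_disjoint.eq (not_disjoint_iff.2 ⟨y, hyi, hy⟩))
      have hT : SameGap T x y :=
        (hC.isGap_iUnion_union x (Or.inl hxJ) y).2 (Or.inl (mem_iUnion.2 ⟨_, hyi⟩))
      rw [hC.isGap_piece i x hi, hyJ, ZMod.intCast_zmod_eq_zero_iff_dvd]
      simp [hT, hxJ]
    · have hy : y = x := Function.IsFixedPt.perm_zpow (hC.fixed x hxS) _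
      have hxJ : x ∉ ⋃ i, J i := disjoint_right.1 hC.disjoint_iUnion hxS
      simp [hy, SameGap.refl, hxJ]
  · rw [sameGap_union_iff, and_iff_left_of_imp
      (hC.isGap_iUnion_union.sameGap_of_notMem subset_union_right hxO)]
    have hxJ : x ∉ ⋃ i, J i := fun h => hxO (Or.inl h)
    simp only [hxJ, false_and, or_false]

section Partition

variable {N : ℕ} {t : Fin N → ℝ}

theorem tE_mono (ht : Monotone t) : Monotone (tE N t) := by
  refine monotone_nat_of_le_succ fun i => ?_
  unfold tE
  split_ifs <;> first
    | contradiction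
    | exact bot_le
    | exact le_top
    | exact EReal.coe_le_coe_iff.2 (ht (Fin.mk_le_mk.2 (by omega)))
    | omega

theorem tE_succ (j : Fin N) : tE N t (j + 1) = t j := by
  rw [tE, dif_pos ⟨by omega, j.isLt⟩]
  rfl

theorem exists_mem_range_of_le_tE_le {i : ℕ} {a b : ℝ} (ha : (a : EReal) ≤ tE N t i)
    (hb : tE N t i ≤ b) : ∃ u ∈ range t, a ≤ u ∧ u ≤ b := by
  unfold tE at ha hb
  split_ifs at ha hb
  · exact ⟨_, mem_range_self _, EReal.coe_le_coe_iff.1 ha, EReal.coe_le_coe_iff.1 hb⟩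
  · exact absurd ha (EReal.bot_lt_coe a).not_ge
  · exact absurd hb (EReal.coe_lt_top b).not_ge

theorem ordConnected_openPiece (i : ℕ) : (openPiece N t i).OrdConnected :=
  ordConnected_Ioo.preimage_mono fun _ _ h => EReal.coe_le_coe_iff.2 h

theorem disjoint_openPiece_range (ht : Monotone t) (i : ℕ) :
    Disjoint (openPiece N t i) (range t) := by
  rw [disjoint_right]
  rintro _ ⟨j, rfl⟩ ⟨h1, h2⟩
  rw [← tE_succ] at h1 h2
  have := (tE_mono ht).reflect_lt h1
  have := (tE_mono ht).reflect_lt h2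
  omega

theorem isGap_openPiece (ht : Monotone t) (i : ℕ) : IsGap (range t) (openPiece N t i) := by
  refine fun x hx y => ⟨fun h => ?_,
    sameGap_of_ordConnected (ordConnected_openPiece i) (disjoint_openPiece_range ht i) hx⟩
  by_contra hy
  obtain ⟨u, hu, hxy⟩ : ∃ u ∈ range t, u ∈ uIcc x y := by
    rcases not_and_or.1 hy with hy | hy
    · obtain ⟨u, hu, hyu, hux⟩ := exists_mem_range_of_le_tE_le (not_lt.1 hy) hx.1.le
      exact ⟨u, hu, mem_uIcc.2 (Or.inr ⟨hyu, hux⟩)⟩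
    · obtain ⟨u, hu, hxu, huy⟩ := exists_mem_range_of_le_tE_le hx.2.le (not_lt.1 hy)
      exact ⟨u, hu, mem_uIcc.2 (Or.inl ⟨hxu, huy⟩)⟩
  exact hy (h.eq_of_mem hu hxy ▸ hx)

theorem openPiece_inter_Iio {i : ℕ} {s : ℝ} (hs : s ∈ openPiece N t i) :
    openPiece N t i ∩ Iio s = {x : ℝ | tE N t i < x ∧ x < s} := by
  ext x
  exact ⟨fun h => ⟨h.1.1, h.2⟩,
    fun h => ⟨⟨h.1, (EReal.coe_lt_coe_iff.2 h.2).trans hs.2⟩, h.2⟩⟩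

theorem openPiece_inter_Ioi {i : ℕ} {s : ℝ} (hs : s ∈ openPiece N t i) :
    openPiece N t i ∩ Ioi s = {x : ℝ | s < x ∧ (x : EReal) < tE N t (i + 1)} := by
  ext x
  exact ⟨fun h => ⟨h.2, h.1.2⟩,
    fun h => ⟨⟨hs.1.trans (EReal.coe_lt_coe_iff.2 h.1), h.2⟩, h.1⟩⟩

end Partition

theorem ZMod.three_cases (i : ZMod 3) : i = 0 ∨ i = 1 ∨ i = 2 := by
  revert i
  decide

theorem iUnion_zmod_three {α : Type*} (J : ZMod 3 → Set α) : ⋃ i, J i = J 0 ∪ J 1 ∪ J 2 := by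
  ext x
  simp only [mem_iUnion, mem_union]
  constructor
  · rintro ⟨i, hi⟩
    rcases ZMod.three_cases i with rfl | rfl | rfl <;> simp [hi]
  · rintro ((h | h) | h)
    exacts [⟨0, h⟩, ⟨1, h⟩, ⟨2, h⟩]

theorem inter_Iio_union_Ioo_union_inter_Ioi_union_pair {O : Set ℝ} (hO : O.OrdConnected)
    {s1 s2 : ℝ} (hs1 : s1 ∈ O) (hs2 : s2 ∈ O) :
    O ∩ Iio s1 ∪ Ioo s1 s2 ∪ O ∩ Ioi s2 ∪ {s1, s2} = O := by
  ext x
  refine ⟨?_, fun hx => ?_⟩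
  · rintro (((hx | hx) | hx) | rfl | rfl)
    exacts [hx.1, hO.out hs1 hs2 (Ioo_subset_Icc_self hx), hx.1, hs1, hs2]
  rcases lt_trichotomy x s1 with h | rfl | h
  · exact Or.inl (Or.inl (Or.inl ⟨hx, h⟩))
  · exact Or.inr (Or.inl rfl)
  rcases lt_trichotomy x s2 with h' | rfl | h'
  · exact Or.inl (Or.inl (Or.inr ⟨h, h'⟩))
  · exact Or.inr (Or.inr rfl)
  · exact Or.inl (Or.inr ⟨hx, h'⟩)

theorem cyclicRefinement_three {T O : Set ℝ} (hO : IsGap T O) {s1 s2 : ℝ} (hs12 : s1 < s2)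
    (hs1 : s1 ∈ O) (hs2 : s2 ∈ O) {J : ZMod 3 → Set ℝ} (hJ0 : J 0 = O ∩ Iio s1)
    (hJ1 : J 1 = Ioo s1 s2) (hJ2 : J 2 = O ∩ Ioi s2) {σ : Equiv.Perm ℝ}
    (hm1 : σ '' J 0 = J 1) (hm2 : σ '' J 1 = J 2) (hm3 : σ '' J 2 = J 0)
    (hm4 : σ s1 = s1) (hm5 : σ s2 = s2) :
    CyclicRefinement T {s1, s2} σ J := by
  have hS : ∀ s ∈ ({s1, s2} : Set ℝ), s1 ≤ s ∧ s ≤ s2 := by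
    rintro s (rfl | rfl)
    exacts [⟨le_rfl, hs12.le⟩, ⟨hs12.le, le_rfl⟩]
  refine ⟨?_, fun i => ?_, fun i j hij => ?_, ?_, fun i => ?_, ?_⟩
  · rwa [iUnion_zmod_three, hJ0, hJ1, hJ2,
      inter_Iio_union_Ioo_union_inter_Ioi_union_pair hO.ordConnected hs1 hs2]
  · rcases ZMod.three_cases i with rfl | rfl | rfl
    · rw [hJ0]
      exact hO.inter (isGap_Iio (by simp) fun s hs => (hS s hs).1)
    · rw [hJ1, ← inter_eq_right.2 (Ioo_subset_Icc_self.trans (hO.ordConnected.out hs1 hs2))]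
      refine hO.inter (isGap_Ioo (by simp) (by simp) (disjoint_right.2 ?_))
      rintro s (rfl | rfl) ⟨h1, h2⟩
      exacts [h1.false, h2.false]
    · rw [hJ2]
      exact hO.inter (isGap_Ioi (by simp) fun s hs => (hS s hs).2)
  · rcases ZMod.three_cases i with rfl | rfl | rfl <;>
      rcases ZMod.three_cases j with rfl | rfl | rfl
    all_goals first
      | exact absurd rfl hij
      | refine disjoint_left.2 fun x hx hx' => ?_
        simp only [hJ0, hJ1, hJ2, mem_inter_iff, mem_Iio, mem_Ioi, mem_Ioo] at hx hx'
        linarith [hx.1, hx.2, hx'.1, hx'.2]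
  · rw [iUnion_zmod_three, hJ0, hJ1, hJ2, disjoint_left]
    rintro x ((hx | hx) | hx) (rfl | rfl) <;>
      simp only [mem_inter_iff, mem_Iio, mem_Ioi, mem_Ioo] at hx <;> linarith [hx.1, hx.2]
  · rcases ZMod.three_cases i with rfl | rfl | rfl
    exacts [hm1, hm2, hm3]
  · rintro s (rfl | rfl)
    exacts [hm4, hm5]

theorem statement17_general (N : ℕ) (t : Fin N → ℝ) (ht : StrictMono t)
    (a0 : ℕ) (s1 s2 : ℝ) (hs12 : s1 < s2)
    (hs1 : s1 ∈ openPiece N t a0) (hs2 : s2 ∈ openPiece N t a0)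
    (I1 I2 I3 : Set ℝ)
    (hI1 : I1 = {x : ℝ | tE N t a0 < (x : EReal) ∧ x < s1})
    (hI2 : I2 = Set.Ioo s1 s2)
    (hI3 : I3 = {x : ℝ | s2 < x ∧ (x : EReal) < tE N t (a0 + 1)})
    (σ : Equiv.Perm ℝ)
    (hm1 : σ '' I1 = I2) (hm2 : σ '' I2 = I3) (hm3 : σ '' I3 = I1)
    (hm4 : σ s1 = s1) (hm5 : σ s2 = s2) :
    (∀ n : ℤ,
      ((3 : ℤ) ∣ n →
        Sep (pcAlgOn (Set.range t ∪ {s1, s2})) σ n = Sep (pcAlgOn (Set.range t)) σ n) ∧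
      (¬((3 : ℤ) ∣ n) →
        Sep (pcAlgOn (Set.range t ∪ {s1, s2})) σ n =
          Sep (pcAlgOn (Set.range t)) σ n ∪ (I1 ∪ I2 ∪ I3))) ∧
    commutant (pcAlgOn (Set.range t ∪ {s1, s2})) (pcAlgOn (Set.range t ∪ {s1, s2})) σ =
      commutant (pcAlgOn (Set.range t)) (pcAlgOn (Set.range t ∪ {s1, s2})) σ \
        {f : ℤ →₀ (ℝ → ℂ) | ∃ n : ℤ, ¬((3 : ℤ) ∣ n) ∧
          ¬(∀ x ∈ I1 ∪ I2 ∪ I3, f n x = 0)} := by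
  rw [← openPiece_inter_Iio hs1] at hI1
  rw [← openPiece_inter_Ioi hs2] at hI3
  obtain ⟨J, hJ0, hJ1, hJ2⟩ : ∃ J : ZMod 3 → Set ℝ, J 0 = I1 ∧ J 1 = I2 ∧ J 2 = I3 :=
    ⟨![I1, I2, I3], rfl, rfl, rfl⟩
  have hC : CyclicRefinement (range t) {s1, s2} σ J := by
    subst hJ0 hJ1 hJ2
    exact cyclicRefinement_three (isGap_openPiece ht.monotone a0) hs12 hs1 hs2 hI1 hI2 hI3
      hm1 hm2 hm3 hm4 hm5
  have key : ∀ n x, x ∈ Sep (pcAlgOn (range t ∪ {s1, s2})) σ n ↔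
      x ∈ Sep (pcAlgOn (range t)) σ n ∨ (x ∈ I1 ∪ I2 ∪ I3 ∧ ¬ (3 : ℤ) ∣ n) := by
    simpa only [iUnion_zmod_three, hJ0, hJ1, hJ2, Nat.cast_ofNat] using hC.mem_sep_union_iff
  refine ⟨fun n => ⟨fun h3 => ?_, fun h3 => ?_⟩, commutant_eq_diff_of_mem_sep_iff σ key⟩
  · ext x
    simp only [key, h3, not_true_eq_false, and_false, or_false]
  · ext x
    rw [key, and_iff_left h3]
    rfl

/-- two jump points `s₁ < s₂` added into one interval `I_{α₀}`, with the three
open subintervals permuted in a 3-cycle by `σ` and the two jump points fixed. Then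
`Sepⁿ_{𝒜_S} = Sepⁿ_𝒜` if `3 ∣ n` and `Sepⁿ_{𝒜_S} = Sepⁿ_𝒜 ∪ (I¹ ∪ I² ∪ I³)` if `3 ∤ n`;
consequently `𝒜_S' = 𝒜' \ {Σ fₙδⁿ : fₙ ≢ 0 on I¹ ∪ I² ∪ I³ for some n with 3 ∤ n}`. -/
theorem statement17 (N : ℕ) (t : Fin N → ℝ) (ht : StrictMono t)
    (a0 : ℕ) (ha0 : a0 ≤ N) (s1 s2 : ℝ) (hs12 : s1 < s2)
    (hs1 : s1 ∈ openPiece N t a0) (hs2 : s2 ∈ openPiece N t a0)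
    (I1 I2 I3 : Set ℝ)
    (hI1 : I1 = {x : ℝ | tE N t a0 < (x : EReal) ∧ x < s1})
    (hI2 : I2 = Set.Ioo s1 s2)
    (hI3 : I3 = {x : ℝ | s2 < x ∧ (x : EReal) < tE N t (a0 + 1)})
    (σ : Equiv.Perm ℝ)
    (h1 : AlgInvariant (pcAlgOn (Set.range t)) σ)
    (h2 : AlgInvariant (pcAlgOn (Set.range t)) σ.symm)
    (h3 : AlgInvariant (pcAlgOn (Set.range t ∪ {s1, s2})) σ)
    (h4 : AlgInvariant (pcAlgOn (Set.range t ∪ {s1, s2})) σ.symm)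
    (hm1 : σ '' I1 = I2) (hm2 : σ '' I2 = I3) (hm3 : σ '' I3 = I1)
    (hm4 : σ s1 = s1) (hm5 : σ s2 = s2) :
    (∀ n : ℤ,
      ((3 : ℤ) ∣ n →
        Sep (pcAlgOn (Set.range t ∪ {s1, s2})) σ n = Sep (pcAlgOn (Set.range t)) σ n) ∧
      (¬((3 : ℤ) ∣ n) →
        Sep (pcAlgOn (Set.range t ∪ {s1, s2})) σ n =
          Sep (pcAlgOn (Set.range t)) σ n ∪ (I1 ∪ I2 ∪ I3))) ∧
    commutant (pcAlgOn (Set.range t ∪ {s1, s2})) (pcAlgOn (Set.range t ∪ {s1, s2})) σ =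
      commutant (pcAlgOn (Set.range t)) (pcAlgOn (Set.range t ∪ {s1, s2})) σ \
        {f : ℤ →₀ (ℝ → ℂ) | ∃ n : ℤ, ¬((3 : ℤ) ∣ n) ∧
          ¬(∀ x ∈ I1 ∪ I2 ∪ I3, f n x = 0)} :=
  statement17_general N t ht a0 s1 s2 hs12 hs1 hs2 I1 I2 I3 hI1 hI2 hI3 σ hm1 hm2 hm3 hm4 hm5

end PaperTRS
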